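/- arXiv:2101.09005 — 8 statements merged into one kernel-verified Lean document; each statement's English description precedes it below -/
import Mathlib

section
/- If ω is a principal n-th root of unity in R and n is not a zero-divisor in R, then the map DFT_ω : R^n → R^n is injective. -/
/-- `ω` is a principal `n`-th root of unity. -/
def IsPrincipalRoot (R : Type*) [CommRing R] (n : ℕ) (ω : R) : Prop :=
  ω ^ n = 1 ∧ ∀ i, 1 ≤ i → i < n → ∑ j ∈ Finset.range n, ω ^ (i * j) = 0

/-- The discrete Fourier transform with respect to `ω`. -/
def dft {R : Type*} [CommRing R] (n : ℕ) (ω : R) (a : Fin n → R) : Fin n → R :=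
  fun i => ∑ j, a j * ω ^ (i.1 * j.1)

/-- If `ω` is a principal `n`-th root of unity and `n` is not a zero-divisor in `R`,
then `DFT_ω : R^n → R^n` is injective. -/
theorem dft_injective {R : Type*} [CommRing R] {n : ℕ} {ω : R}
    (h : IsPrincipalRoot R n ω) (hn : ∀ x : R, n • x = 0 → x = 0) :
    Function.Injective (dft n ω) := by
  intro a b hab
  funext k
  have hk := k.2
  have hpow : ∀ e : ℕ, ω ^ e = ω ^ (e % n) := by
    intro e
    conv_lhs => rw [← Nat.mod_add_div e n]
    rw [pow_add, pow_mul, h.1, one_pow, mul_one]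
  have key : ∀ c : Fin n → R,
      (∑ i : Fin n, dft n ω c i * ω ^ (i.1 * (n - k.1))) = n • c k := by
    intro c
    simp only [dft, Finset.sum_mul]
    rw [Finset.sum_comm]
    have step : ∀ j : Fin n,
        (∑ i : Fin n, c j * ω ^ (i.1 * j.1) * ω ^ (i.1 * (n - k.1)))
        = c j * ∑ i : Fin n, ω ^ (((j.1 + (n - k.1)) % n) * i.1) := by
      intro j
      rw [Finset.mul_sum]
      refine Finset.sum_congr rfl fun i _ => ?_
      rw [mul_assoc, ← pow_add, ← Nat.mul_add, mul_comm i.1, pow_mul, hpow, ← pow_mul]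
    rw [Finset.sum_congr rfl fun j _ => step j]
    rw [Finset.sum_eq_single k]
    · have h0 : (k.1 + (n - k.1)) % n = 0 := by
        have h1 : k.1 + (n - k.1) = n := by omega
        rw [h1, Nat.mod_self]
      rw [h0]
      simp [mul_comm, Finset.card_univ]
    · intro j _ hj
      have hm1 : 1 ≤ (j.1 + (n - k.1)) % n := by
        rcases Nat.eq_zero_or_pos ((j.1 + (n - k.1)) % n) with h0 | h0
        · exfalso
          obtain ⟨q, hq⟩ := Nat.dvd_of_mod_eq_zero h0
          have hq2 : q < 2 := by
            by_contra hq2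
            push_neg at hq2
            have h2n : 2 * n ≤ n * q := by
              calc 2 * n = n * 2 := by ring
              _ ≤ n * q := Nat.mul_le_mul_left n hq2
            have := j.2
            omega
          interval_cases q
          · have := j.2; omega
          · have hjk : j.1 = k.1 := by have := j.2; omega
            exact hj (Fin.ext hjk)
        · exact h0
      have hm2 : (j.1 + (n - k.1)) % n < n := Nat.mod_lt _ (by omega)
      rw [Fin.sum_univ_eq_sum_range (fun i => ω ^ (((j.1 + (n - k.1)) % n) * i)) n,
        h.2 _ hm1 hm2, mul_zero]
    · simp
  have ha := key a
  have hb := key b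
  rw [hab] at ha
  have : n • (a k - b k) = 0 := by
    rw [smul_sub, ← ha, ← hb, sub_self]
  have := hn _ this
  exact sub_eq_zero.mp this
end

section
/- Let n = 2^p with p ≥ 1, and let ω ∈ R satisfy ω^n = 1 and ω^{n/2} = −1. Then ω is a principal n-th root of unity. -/
lemma sum_pow_double_eq_zero {R : Type*} [CommRing R] (s : ℕ) (y : R)
    (hy : y ^ s = -1) : ∑ j ∈ Finset.range (2 * s), y ^ j = 0 := by
  rw [two_mul, Finset.sum_range_add]
  have h : ∀ j, y ^ (s + j) = -(y ^ j) := fun j => by rw [pow_add, hy]; ring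
  simp [h]

lemma sum_pow_double_eq_two_mul {R : Type*} [CommRing R] (s : ℕ) (y : R)
    (hy : y ^ s = 1) :
    ∑ j ∈ Finset.range (2 * s), y ^ j = 2 * ∑ j ∈ Finset.range s, y ^ j := by
  rw [two_mul, Finset.sum_range_add]
  have h : ∀ j, y ^ (s + j) = y ^ j := fun j => by rw [pow_add, hy, one_mul]
  simp [h]; ring

/-- Let `n = 2^p` with `p ≥ 1`, and let `ω ∈ R` satisfy `ω^n = 1` and `ω^(n/2) = -1`.
Then `ω` is a principal `n`-th root of unity, i.e. `∑_{j=0}^{n-1} ω^(i j) = 0` for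
all `i ∈ {1, ..., n-1}`. -/
theorem isPrincipalRoot_of_pow_half_eq_neg_one {R : Type*} [CommRing R]
    (p : ℕ) (hp : 1 ≤ p) (ω : R)
    (h1 : ω ^ 2 ^ p = 1) (h2 : ω ^ 2 ^ (p - 1) = -1) :
    ∀ i, 1 ≤ i → i < 2 ^ p → ∑ j ∈ Finset.range (2 ^ p), ω ^ (i * j) = 0 := by
  induction p generalizing ω with
  | zero => omega
  | succ n IH =>
    intro i hi1 hi2
    have hpow : ∀ j, ω ^ (i * j) = (ω ^ i) ^ j := fun j => by rw [pow_mul]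
    simp only [hpow]
    have h2' : ω ^ 2 ^ n = -1 := by simpa using h2
    have hsplit : (2:ℕ) ^ (n + 1) = 2 * 2 ^ n := by ring
    rcases Nat.even_or_odd i with he | ho
    · -- even case
      obtain ⟨m, rfl⟩ := he
      have hn : 1 ≤ n := by
        rcases Nat.eq_zero_or_pos n with h | h
        · subst h; omega
        · exact h
      have hm2 : m < 2 ^ n := by omega
      have hm1 : 1 ≤ m := by omega
      have hS : ∑ j ∈ Finset.range (2 ^ n), (ω ^ 2) ^ (m * j) = 0 := by
        refine IH hn (ω ^ 2) ?_ ?_ m hm1 hm2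
        · rw [← pow_mul, ← hsplit, h1]
        · rw [← pow_mul]
          have : 2 * 2 ^ (n - 1) = 2 ^ n := by
            rw [← pow_succ']; congr 1; omega
          rw [this, h2']
      have hx1 : (ω ^ (m + m)) ^ 2 ^ n = 1 := by
        rw [← pow_mul, show (m + m) * 2 ^ n = 2 ^ (n + 1) * m by ring, pow_mul,
          h1, one_pow]
      rw [hsplit, sum_pow_double_eq_two_mul _ _ hx1]
      have : ∀ j, (ω ^ (m + m)) ^ j = (ω ^ 2) ^ (m * j) := fun j => by
        rw [← pow_mul, ← pow_mul]; ring_nf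
      simp only [this, hS, mul_zero]
    · -- odd case
      have hx : (ω ^ i) ^ 2 ^ n = -1 := by
        rw [← pow_mul, mul_comm, pow_mul, h2', ho.neg_one_pow]
      rw [hsplit, sum_pow_double_eq_zero _ _ hx]
end

section
/- (Cooley–Tukey recursion correctness.) Let ω be a principal n-th root of unity with n = 2^p and ω^{n/2} = −1, and let a = (a_0,...,a_{n−1}) ∈ R^n. Define a_{k,i} recursively by a_{p,i} = a_i, and for k < p, a_{k,2^k(2i)+j} = a_{k+1,2^k(2i)+j} + ω^{[2i]_p} a_{k+1,2^k(2i+1)+j} and a_{k,2^k(2i+1)+j} = a_{k+1,2^k(2i)+j} − ω^{[2i]_p} a_{k+1,2^k(2i+1)+j}, for i ∈ {0,...,2^{p−k−1}−1}, j ∈ {0,...,2^k−1}. Then DFT_ω(a) = (a_{0,[0]_p}, a_{0,[1]_p}, ..., a_{0,[n−1]_p}). -/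
/-- The `k`-bit bit-reversal permutation on `{0, ..., 2^k - 1}`. -/
def bitRev (k i : ℕ) : ℕ := ∑ j ∈ Finset.range k, 2 ^ (k - 1 - j) * (i / 2 ^ j % 2)

lemma bitRev_succ (k i : ℕ) :
    bitRev (k+1) i = 2 ^ k * (i % 2) + bitRev k (i / 2) := by
  unfold bitRev
  rw [Finset.sum_range_succ', add_comm]
  congr 1
  · simp
  · apply Finset.sum_congr rfl
    intro j hj
    congr 1
    · congr 1; omega
    · rw [Nat.div_div_eq_div_mul]
      congr 1
      rw [pow_succ]
      ring

lemma bitRev_lt (k : ℕ) : ∀ i, bitRev k i < 2 ^ k := by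
  induction k with
  | zero => intro i; simp [bitRev]
  | succ k ih =>
      intro i
      rw [bitRev_succ, pow_succ]
      have := ih (i / 2)
      rcases Nat.mod_two_eq_zero_or_one i with h | h <;> rw [h] <;> omega

lemma bitRev_high (k : ℕ) : ∀ b < 2, ∀ s < 2 ^ k,
    bitRev (k+1) (2 ^ k * b + s) = 2 * bitRev k s + b := by
  induction k with
  | zero =>
      intro b hb s hs
      interval_cases s
      rw [bitRev_succ]
      simp [bitRev]
      interval_cases b <;> simp
  | succ k ih =>
      intro b hb s hs
      have h1 : (2 ^ (k+1) * b + s) % 2 = s % 2 := by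
        interval_cases b <;> simp [pow_succ] <;> omega
      have h2 : (2 ^ (k+1) * b + s) / 2 = 2 ^ k * b + s / 2 := by
        interval_cases b <;> simp [pow_succ] <;> omega
      rw [bitRev_succ (k+1) (2 ^ (k+1) * b + s), h1, h2,
        ih b hb (s / 2) (by rw [pow_succ] at hs; omega), bitRev_succ k s]
      ring

lemma bitRev_bitRev (k : ℕ) : ∀ i < 2 ^ k, bitRev k (bitRev k i) = i := by
  induction k with
  | zero => intro i hi; interval_cases i; simp [bitRev]
  | succ k ih =>
      intro i hi
      rw [show bitRev (k+1) i = 2 ^ k * (i % 2) + bitRev k (i / 2) from bitRev_succ k i,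
        bitRev_high k (i % 2) (Nat.mod_lt _ two_pos) _ (bitRev_lt k (i/2)),
        ih (i/2) (by rw [pow_succ] at hi; omega)]
      omega

lemma sum_range_two_mul {M : Type*} [AddCommMonoid M] (n : ℕ) (f : ℕ → M) :
    ∑ t ∈ Finset.range (2 * n), f t
      = ∑ u ∈ Finset.range n, f (2 * u) + ∑ u ∈ Finset.range n, f (2 * u + 1) := by
  induction n with
  | zero => simp
  | succ n ih =>
      rw [show 2 * (n+1) = (2*n+1)+1 from by ring, Finset.sum_range_succ,
        Finset.sum_range_succ, Finset.sum_range_succ, Finset.sum_range_succ, ih]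
      abel

/-- Cooley–Tukey recursion correctness: the radix-2 FFT sequences compute the DFT,
with output in bit-reversed order: `DFT_ω(a)_i = a_{0,[i]_p}`. -/
theorem cooley_tukey_correct {R : Type*} [CommRing R]
    (p : ℕ) (hp : 1 ≤ p) (ω : R)
    (hω1 : ω ^ 2 ^ p = 1) (hω2 : ω ^ 2 ^ (p - 1) = -1)
    (a : ℕ → R) (A : ℕ → ℕ → R)
    (hAp : ∀ i < 2 ^ p, A p i = a i)
    (hrec : ∀ k < p, ∀ i < 2 ^ (p - k - 1), ∀ j < 2 ^ k,
      A k (2 ^ k * (2 * i) + j)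
          = A (k + 1) (2 ^ k * (2 * i) + j)
            + ω ^ bitRev p (2 * i) * A (k + 1) (2 ^ k * (2 * i + 1) + j) ∧
      A k (2 ^ k * (2 * i + 1) + j)
          = A (k + 1) (2 ^ k * (2 * i) + j)
            - ω ^ bitRev p (2 * i) * A (k + 1) (2 ^ k * (2 * i + 1) + j)) :
    ∀ i < 2 ^ p, ∑ j ∈ Finset.range (2 ^ p), a j * ω ^ (i * j) = A 0 (bitRev p i) := by
  have key : ∀ d, d ≤ p → ∀ m < 2 ^ d, ∀ j < 2 ^ (p - d),
      A (p - d) (2 ^ (p - d) * m + j)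
        = ∑ t ∈ Finset.range (2 ^ d), a (2 ^ (p - d) * t + j) * ω ^ (t * bitRev p m) := by
    intro d
    induction d with
    | zero =>
        intro _ m hm j hj
        interval_cases m
        simp only [Nat.sub_zero, pow_zero, Finset.range_one, Finset.sum_singleton,
          mul_zero, zero_add, mul_one]
        rw [hAp j (by simpa using hj)]
        simp [bitRev]
    | succ d ih =>
        intro hdp m hm j hj
        set k := p - (d + 1) with hkdef
        have hk1 : k + 1 = p - d := by omega
        have hkp : k < p := by omega
        have hd1 : p - k - 1 = d := by omega
        have hpq : p - 1 + 1 = p := by omega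
        have hpp : (2:ℕ) ^ p = 2 ^ (p - 1) * 2 := by rw [← pow_succ, hpq]
        have hm2 : m < 2 * 2 ^ d := by rw [pow_succ] at hm; omega
        set i := m / 2 with hidef
        have hi : i < 2 ^ d := by omega
        obtain ⟨h1, h2⟩ := hrec k hkp i (by rw [hd1]; exact hi) j hj
        have hjlt : j < 2 ^ (p - d) := by rw [← hk1, pow_succ]; omega
        have hjlt2 : 2 ^ k + j < 2 ^ (p - d) := by rw [← hk1, pow_succ]; omega
        have ih1 := ih (by omega) i hi j hjlt
        have ih2 := ih (by omega) i hi (2 ^ k + j) hjlt2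
        have e1 : 2 ^ k * (2 * i) + j = 2 ^ (p - d) * i + j := by rw [← hk1, pow_succ]; ring
        have e2 : 2 ^ k * (2 * i + 1) + j = 2 ^ (p - d) * i + (2 ^ k + j) := by
          rw [← hk1, pow_succ]; ring
        -- bit reversal facts
        have f1 : bitRev p m = 2 ^ (p - 1) * (m % 2) + bitRev (p - 1) i := by
          conv_lhs => rw [← hpq, bitRev_succ]
        have f2 : bitRev p (2 * i) = bitRev (p - 1) i := by
          conv_lhs => rw [← hpq, bitRev_succ]
          simp [Nat.mul_div_cancel_left]
        have f3 : bitRev p i = 2 * bitRev (p - 1) i := by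
          conv_lhs => rw [← hpq]
          have hi' : i < 2 ^ (p - 1) :=
            lt_of_lt_of_le hi (Nat.pow_le_pow_right (by norm_num) (by omega))
          have := bitRev_high (p - 1) 0 (by norm_num) i hi'
          simpa using this
        -- split the RHS sum
        rw [show (2:ℕ) ^ (d+1) = 2 * 2 ^ d from by rw [pow_succ]; ring,
          sum_range_two_mul]
        have heven : ∀ u ∈ Finset.range (2 ^ d),
            a (2 ^ k * (2 * u) + j) * ω ^ ((2 * u) * bitRev p m)
              = a (2 ^ (p - d) * u + j) * ω ^ (u * bitRev p i) := by
          intro u _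
          have hidx : 2 ^ k * (2 * u) + j = 2 ^ (p - d) * u + j := by
            rw [← hk1, pow_succ]; ring
          rw [hidx]
          congr 1
          rw [f1, f3]
          rcases Nat.mod_two_eq_zero_or_one m with hb | hb
          · rw [hb]; ring_nf
          · rw [hb, show 2 * u * (2 ^ (p-1) * 1 + bitRev (p-1) i)
                = 2 ^ p * u + u * (2 * bitRev (p-1) i) from by rw [hpp]; ring]
            rw [pow_add, pow_mul, hω1, one_pow, one_mul]
        have hodd : ∀ u ∈ Finset.range (2 ^ d),
            a (2 ^ k * (2 * u + 1) + j) * ω ^ ((2 * u + 1) * bitRev p m)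
              = (if m % 2 = 0 then (1:R) else -1) * ω ^ bitRev p (2 * i)
                * (a (2 ^ (p - d) * u + (2 ^ k + j)) * ω ^ (u * bitRev p i)) := by
          intro u _
          have hidx : 2 ^ k * (2 * u + 1) + j = 2 ^ (p - d) * u + (2 ^ k + j) := by
            rw [← hk1, pow_succ]; ring
          rw [hidx, f1, f2, f3]
          rcases Nat.mod_two_eq_zero_or_one m with hb | hb
          · rw [hb, if_pos rfl, one_mul,
              show (2*u+1) * (2 ^ (p-1) * 0 + bitRev (p-1) i)
                = bitRev (p-1) i + u * (2 * bitRev (p-1) i) from by ring, pow_add]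
            ring
          · rw [hb, if_neg one_ne_zero,
              show (2*u+1) * (2 ^ (p-1) * 1 + bitRev (p-1) i)
                = 2 ^ p * u + (2 ^ (p-1) + (bitRev (p-1) i + u * (2 * bitRev (p-1) i))) from by
                rw [hpp]; ring]
            rw [pow_add, pow_mul, hω1, one_pow, one_mul, pow_add, pow_add, hω2]
            ring
        rw [Finset.sum_congr rfl heven, Finset.sum_congr rfl hodd, ← Finset.mul_sum]
        rw [hk1, e1, e2] at h1 h2
        rcases Nat.mod_two_eq_zero_or_one m with hb | hb
        · have hmi : m = 2 * i := by omega
          rw [hb, if_pos rfl, one_mul, hmi, e1, h1, ih1, ih2]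
        · have hmi : m = 2 * i + 1 := by omega
          rw [hb, if_neg one_ne_zero, hmi, e2, h2, ih1, ih2]
          ring
  intro i hi
  have h := key p le_rfl (bitRev p i) (bitRev_lt p i) 0 (by simp)
  simp only [Nat.sub_self, pow_zero, one_mul, add_zero] at h
  rw [h, bitRev_bitRev p i hi]
  apply Finset.sum_congr rfl
  intro t _
  rw [mul_comm i t]
end

section
/- (Zero-padding collapse, Lemma on level m−1.) Let ℓ ∈ {2,...,n}, m = ⌈log₂ ℓ⌉, and a_0,...,a_{n−1} ∈ R with a_ℓ = ... = a_{n−1} = 0. Define a_{k,i} by the radix-2 FFT recursion. Then for i ∈ {0,1} and j ∈ {0,...,2^{m−1}−1}: a_{m−1,2^{m−1} i + j} = a_j + (−1)^i a_{2^{m−1}+j} if j < ℓ − 2^{m−1}, and a_{m−1,2^{m−1} i + j} = a_j if j ≥ ℓ − 2^{m−1}. -/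
/-- Zero-padding collapse at level `m - 1`: if `a_ℓ = ⋯ = a_{n-1} = 0` and
`m = ⌈log₂ ℓ⌉`, then `a_{m-1, 2^(m-1) i + j} = a_j + (-1)^i a_{2^(m-1)+j}` for
`j < ℓ - 2^(m-1)`, and `= a_j` for `j ≥ ℓ - 2^(m-1)`. -/
theorem level_m_sub_one {R : Type*} [CommRing R]
    (p : ℕ) (hp : 1 ≤ p) (ω : R)
    (hω1 : ω ^ 2 ^ p = 1) (hω2 : ω ^ 2 ^ (p - 1) = -1)
    (a : ℕ → R) (A : ℕ → ℕ → R)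
    (hAp : ∀ i < 2 ^ p, A p i = a i)
    (hrec : ∀ k < p, ∀ i < 2 ^ (p - k - 1), ∀ j < 2 ^ k,
      A k (2 ^ k * (2 * i) + j)
          = A (k + 1) (2 ^ k * (2 * i) + j)
            + ω ^ bitRev p (2 * i) * A (k + 1) (2 ^ k * (2 * i + 1) + j) ∧
      A k (2 ^ k * (2 * i + 1) + j)
          = A (k + 1) (2 ^ k * (2 * i) + j)
            - ω ^ bitRev p (2 * i) * A (k + 1) (2 ^ k * (2 * i + 1) + j))
    (ℓ m : ℕ) (hℓ2 : 2 ≤ ℓ) (hℓn : ℓ ≤ 2 ^ p) (hm : m = Nat.clog 2 ℓ)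
    (hzero : ∀ i, ℓ ≤ i → i < 2 ^ p → a i = 0) :
    ∀ i < 2, ∀ j < 2 ^ (m - 1),
      A (m - 1) (2 ^ (m - 1) * i + j)
        = if j < ℓ - 2 ^ (m - 1) then a j + (-1 : R) ^ i * a (2 ^ (m - 1) + j)
          else a j := by
  have hm1 : 1 ≤ m := hm ▸ Nat.clog_pos one_lt_two hℓ2
  have hmp : m ≤ p := by
    rw [hm]
    calc Nat.clog 2 ℓ ≤ Nat.clog 2 (2 ^ p) := Nat.clog_mono_right 2 hℓn
    _ = p := Nat.clog_pow 2 p one_lt_two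
  have hℓm : ℓ ≤ 2 ^ m := hm ▸ Nat.le_pow_clog one_lt_two ℓ
  have hlow : 2 ^ (m - 1) < ℓ := by
    have := Nat.pow_pred_clog_lt_self one_lt_two (b := 2) (x := ℓ) (lt_of_lt_of_le one_lt_two hℓ2)
    rwa [hm]
  -- key: for m ≤ k ≤ p, A k (2^k * i + j) = a j
  have key : ∀ d k, p - k ≤ d → m ≤ k → k ≤ p → ∀ i < 2 ^ (p - k), ∀ j < 2 ^ k,
      A k (2 ^ k * i + j) = a j := by
    intro d
    induction d with
    | zero =>
      intro k hd hmk hkp i hi j hj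
      have hk : k = p := by omega
      subst hk
      have : i = 0 := by simpa using hi
      subst this
      simpa using hAp j hj
    | succ d ih =>
      intro k hd hmk hkp i hi j hj
      rcases eq_or_lt_of_le hkp with hk | hk
      · subst hk
        have : i = 0 := by simpa using hi
        subst this
        simpa using hAp j hj
      · -- k < p ; write i = 2 * i' + b
        have hb : i % 2 < 2 := Nat.mod_lt _ (by norm_num)
        have hiq : i / 2 < 2 ^ (p - k - 1) := by
          have : 2 ^ (p - k) = 2 * 2 ^ (p - k - 1) := by
            rw [← pow_succ']
            congr 1
            omega
          omega
        have hrec' := hrec k hk (i / 2) hiq j hj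
        have hjk1 : j < 2 ^ (k + 1) := lt_of_lt_of_le hj (Nat.pow_le_pow_right (by norm_num) (by omega))
        have h2kj : 2 ^ k + j < 2 ^ (k + 1) := by
          have : 2 ^ (k + 1) = 2 ^ k + 2 ^ k := by ring
          omega
        have ih1 : A (k + 1) (2 ^ k * (2 * (i / 2)) + j) = a j := by
          have : 2 ^ k * (2 * (i / 2)) + j = 2 ^ (k + 1) * (i / 2) + j := by ring_nf
          rw [this]
          exact ih (k + 1) (by omega) (by omega) (by omega) (i / 2) (by
            have h1 : p - k = (p - (k + 1)) + 1 := by omega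
            have : 2 ^ (p - k) = 2 * 2 ^ (p - (k + 1)) := by rw [h1, pow_succ']
            omega) j hjk1
        have ih2 : A (k + 1) (2 ^ k * (2 * (i / 2) + 1) + j) = a (2 ^ k + j) := by
          have : 2 ^ k * (2 * (i / 2) + 1) + j = 2 ^ (k + 1) * (i / 2) + (2 ^ k + j) := by ring
          rw [this]
          exact ih (k + 1) (by omega) (by omega) (by omega) (i / 2) (by
            have h1 : p - k = (p - (k + 1)) + 1 := by omega
            have : 2 ^ (p - k) = 2 * 2 ^ (p - (k + 1)) := by rw [h1, pow_succ']
            omega) _ h2kj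
        have hz : a (2 ^ k + j) = 0 := by
          apply hzero
          · calc ℓ ≤ 2 ^ m := hℓm
            _ ≤ 2 ^ k := Nat.pow_le_pow_right (by norm_num) hmk
            _ ≤ 2 ^ k + j := Nat.le_add_right _ _
          · calc 2 ^ k + j < 2 ^ (k + 1) := h2kj
            _ ≤ 2 ^ p := Nat.pow_le_pow_right (by norm_num) (by omega)
        have hiw : i = 2 * (i / 2) + i % 2 := by omega
        have hb2 : i % 2 = 0 ∨ i % 2 = 1 := by omega
        rcases hb2 with h0 | h1
        · rw [hiw, h0, add_zero, hrec'.1, ih1, ih2, hz, mul_zero, add_zero]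
        · rw [hiw, h1, hrec'.2, ih1, ih2, hz, mul_zero, sub_zero]
  -- bitRev p 0 = 0
  have hbr : bitRev p 0 = 0 := by
    unfold bitRev
    apply Finset.sum_eq_zero
    intro x _
    simp
  -- butterfly at level m - 1 with i' = 0
  have hm1lt : m - 1 < p := by omega
  have hrec0 := hrec (m - 1) hm1lt 0 (Nat.pow_pos (by norm_num))
  have hstep : m - 1 + 1 = m := by omega
  have h2m : 2 ^ (m - 1) + 2 ^ (m - 1) = 2 ^ m := by
    calc 2 ^ (m - 1) + 2 ^ (m - 1) = 2 ^ (m - 1) * 2 := by omega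
    _ = 2 ^ (m - 1 + 1) := (pow_succ 2 (m - 1)).symm
    _ = 2 ^ m := by rw [hstep]
  intro i hi j hj
  have hrec0' := hrec0 j hj
  have hA1 : A (m - 1 + 1) (2 ^ (m - 1) * (2 * 0) + j) = a j := by
    rw [hstep]
    have e : 2 ^ (m - 1) * (2 * 0) + j = 2 ^ m * 0 + j := by ring
    rw [e]
    exact key p m (by omega) le_rfl hmp 0 (Nat.pow_pos (by norm_num)) j
      (lt_of_lt_of_le hj (Nat.pow_le_pow_right (by norm_num) (by omega)))
  have hA2 : A (m - 1 + 1) (2 ^ (m - 1) * (2 * 0 + 1) + j) = a (2 ^ (m - 1) + j) := by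
    rw [hstep]
    have e : 2 ^ (m - 1) * (2 * 0 + 1) + j = 2 ^ m * 0 + (2 ^ (m - 1) + j) := by ring
    rw [e]
    exact key p m (by omega) le_rfl hmp 0 (Nat.pow_pos (by norm_num))
      (2 ^ (m - 1) + j) (by omega)
  have hzcase : ¬ j < ℓ - 2 ^ (m - 1) → a (2 ^ (m - 1) + j) = 0 := by
    intro h
    apply hzero
    · omega
    · have : 2 ^ m ≤ 2 ^ p := Nat.pow_le_pow_right (by norm_num) hmp
      omega
  interval_cases i
  · -- i = 0
    have := hrec0'.1
    rw [hA1, hA2, mul_zero, mul_zero, hbr, pow_zero, one_mul] at this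
    simp only [mul_zero, add_zero] at this ⊢
    rw [this]
    by_cases hc : j < ℓ - 2 ^ (m - 1)
    · simp [hc]
    · simp [hc, hzcase hc]
  · -- i = 1
    have := hrec0'.2
    rw [hA1, hA2, hbr, pow_zero, one_mul] at this
    have e : 2 ^ (m - 1) * (2 * 0 + 1) + j = 2 ^ (m - 1) * 1 + j := by ring
    rw [e] at this
    rw [this]
    by_cases hc : j < ℓ - 2 ^ (m - 1)
    · simp [hc, sub_eq_add_neg]
    · simp [hc, hzcase hc]
end

section
/- With a_{k,i} defined by the radix-2 FFT recursion and a_ℓ = ... = a_{n−1} = 0 with ℓ ≤ 2^m for some m ≤ p, one has a_{m,j} = a_j for all j ∈ {0,...,2^m − 1}. -/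
/-- With `a_ℓ = ⋯ = a_{n-1} = 0` and `ℓ ≤ 2^m` for some `m ≤ p`, one has
`a_{m,j} = a_j` for all `j ∈ {0, ..., 2^m - 1}`. -/
theorem level_m_identity {R : Type*} [CommRing R]
    (p : ℕ) (hp : 1 ≤ p) (ω : R)
    (hω1 : ω ^ 2 ^ p = 1) (hω2 : ω ^ 2 ^ (p - 1) = -1)
    (a : ℕ → R) (A : ℕ → ℕ → R)
    (hAp : ∀ i < 2 ^ p, A p i = a i)
    (hrec : ∀ k < p, ∀ i < 2 ^ (p - k - 1), ∀ j < 2 ^ k,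
      A k (2 ^ k * (2 * i) + j)
          = A (k + 1) (2 ^ k * (2 * i) + j)
            + ω ^ bitRev p (2 * i) * A (k + 1) (2 ^ k * (2 * i + 1) + j) ∧
      A k (2 ^ k * (2 * i + 1) + j)
          = A (k + 1) (2 ^ k * (2 * i) + j)
            - ω ^ bitRev p (2 * i) * A (k + 1) (2 ^ k * (2 * i + 1) + j))
    (ℓ m : ℕ) (hℓ : ℓ ≤ 2 ^ m) (hmp : m ≤ p)
    (hzero : ∀ i, ℓ ≤ i → i < 2 ^ p → a i = 0) :
    ∀ j < 2 ^ m, A m j = a j := by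
  have hrev0 : bitRev p 0 = 0 := by
    unfold bitRev
    simp
  have key : ∀ d k, k + d = p → m ≤ k → ∀ x < 2 ^ k, A k x = a x := by
    intro d
    induction d with
    | zero =>
      intro k hk _ x hx
      have : k = p := by omega
      subst this
      exact hAp x hx
    | succ d ih =>
      intro k hk hmk x hx
      have hkp : k < p := by omega
      have h1 := (hrec k hkp 0 (Nat.pow_pos (by norm_num)) x hx).1
      simp only [Nat.mul_zero, Nat.zero_add, hrev0, pow_zero, one_mul,
        mul_zero, zero_add, mul_one] at h1
      have hlt1 : x < 2 ^ (k + 1) := lt_of_lt_of_le hx (by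
        exact Nat.pow_le_pow_right (by norm_num) (by omega))
      have hlt2 : 2 ^ k + x < 2 ^ (k + 1) := by
        have := hx
        rw [pow_succ]; omega
      have e1 := ih (k + 1) (by omega) (by omega) x hlt1
      have e2 := ih (k + 1) (by omega) (by omega) (2 ^ k + x) hlt2
      have hz : a (2 ^ k + x) = 0 := by
        apply hzero
        · have h2m : (2 : ℕ) ^ m ≤ 2 ^ k := Nat.pow_le_pow_right (by norm_num) hmk
          omega
        · exact lt_of_lt_of_le hlt2 (Nat.pow_le_pow_right (by norm_num) (by omega))
      rw [h1, e1, e2, hz, add_zero]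
  intro j hj
  exact key (p - m) m (by omega) le_rfl j hj
end

section
/- (TFT decomposition.) Write ℓ ∈ {1,...,n} as ℓ = ∑_{r=1}^t ℓ_r for powers of two ℓ_1 > ℓ_2 > ... > ℓ_t, and let e_r = [ℓ_r + ... + ℓ_t]_p for r ∈ {1,...,t}, with [n]_p taken to be 0. Then for any polynomial f over R of degree less than ℓ, TFT_{ω,ℓ}(f) equals the concatenation, for r = 1,...,t, of TFT_{ω^{n/ℓ_r},ℓ_r}(f_r(x/ω^{e_r})), where f_r is the residue of f(ω^{[ℓ]_p} x) modulo x^{ℓ_r} + 1 of degree less than ℓ_r. -/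
-- additivity on disjoint bits
lemma bitRev_add (p k a b : ℕ) (ha : 2 ^ k ∣ a) (hb : b < 2 ^ k) :
    bitRev p (a + b) = bitRev p a + bitRev p b := by
  unfold bitRev
  rw [← Finset.sum_add_distrib]
  apply Finset.sum_congr rfl
  intro j _
  rw [← Nat.mul_add]
  congr 1
  obtain ⟨a', rfl⟩ := ha
  rcases lt_or_ge j k with hj | hj
  · have h2 : (2:ℕ)^k = 2^j * 2^(k-j) := by rw [← pow_add]; congr 1; omega
    have hdvd : (2:ℕ)^j ∣ 2^k * a' := ⟨2^(k-j)*a', by rw [h2]; ring⟩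
    rw [Nat.add_div_of_dvd_right hdvd]
    have : 2^k*a'/2^j = 2 * (2^(k-j-1) * a') := by
      rw [h2, mul_assoc, Nat.mul_div_cancel_left _ (Nat.two_pow_pos j)]
      have : (2:ℕ)^(k-j) = 2 * 2^(k-j-1) := by rw [← pow_succ']; congr 1; omega
      rw [this]; ring
    rw [this]
    omega
  · have hb' : b / 2^j = 0 := Nat.div_eq_of_lt (lt_of_lt_of_le hb (Nat.pow_le_pow_right two_pos hj))
    have h2 : (2:ℕ)^j = 2^k * 2^(j-k) := by rw [← pow_add]; congr 1; omega
    rw [hb', h2, ← Nat.div_div_eq_div_mul, ← Nat.div_div_eq_div_mul]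
    rw [Nat.add_div_of_dvd_right ⟨a', rfl⟩, Nat.mul_div_cancel_left _ (Nat.two_pow_pos k),
      Nat.div_eq_of_lt hb]
    simp

lemma bitRev_small (p q j : ℕ) (hq : q ≤ p) (hj : j < 2 ^ q) :
    bitRev p j = 2 ^ (p - q) * bitRev q j := by
  unfold bitRev
  rw [Finset.mul_sum]
  rw [← Finset.sum_subset (Finset.range_subset_range.mpr hq)]
  · apply Finset.sum_congr rfl
    intro i hi
    have hi' := Finset.mem_range.mp hi
    rw [← mul_assoc, ← pow_add]
    congr 2
    omega
  · intro i _ hi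
    have hi' : q ≤ i := by simpa using hi
    have : j / 2^i = 0 := Nat.div_eq_of_lt (lt_of_lt_of_le hj (Nat.pow_le_pow_right two_pos hi'))
    simp [this]

lemma bitRev_two_pow (p q : ℕ) (hq : q < p) : bitRev p (2 ^ q) = 2 ^ (p - 1 - q) := by
  unfold bitRev
  rw [Finset.sum_eq_single q]
  · rw [Nat.div_self (Nat.two_pow_pos q)]
    simp
  · intro i _ hne
    rcases lt_or_ge i q with h | h
    · have : (2:ℕ)^q / 2^i = 2 * 2^(q-i-1) := by
        rw [show q = i + (q - i) by omega, pow_add, Nat.mul_div_cancel_left _ (Nat.two_pow_pos i)]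
        rw [← pow_succ']; congr 1; omega
      simp [this, Nat.mul_mod_right]
    · have hlt : i > q := lt_of_le_of_ne h (Ne.symm hne)
      have : (2:ℕ)^q / 2^i = 0 := Nat.div_eq_of_lt (Nat.pow_lt_pow_right one_lt_two hlt)
      simp [this]
  · intro h; exact absurd (Finset.mem_range.mpr hq) h

lemma bitRev_two_pow_self (p : ℕ) : bitRev p (2 ^ p) = 0 := by
  unfold bitRev
  apply Finset.sum_eq_zero
  intro i hi
  have hi' := Finset.mem_range.mp hi
  have : (2:ℕ)^p / 2^i = 2 * 2^(p-i-1) := by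
    rw [show p = i + (p - i) by omega, pow_add, Nat.mul_div_cancel_left _ (Nat.two_pow_pos i)]
    rw [← pow_succ']; congr 1; omega
  simp [this, Nat.mul_mod_right]
-- structural lemmas about the L sequence
lemma L_mono (t : ℕ) (L : ℕ → ℕ) (hdec : ∀ r, r + 1 < t → L (r + 1) < L r) :
    ∀ s r, s < r → r < t → L r < L s := by
  intro s r hsr hrt
  induction r with
  | zero => omega
  | succ r ih =>
    rcases Nat.lt_or_ge s r with h | h
    · exact lt_trans (hdec r hrt) (ih h (by omega))
    · have : s = r := by omega
      subst this; exact hdec s hrt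
lemma L_sum_lt (t : ℕ) (L : ℕ → ℕ)
    (hpow : ∀ r < t, ∃ e, L r = 2 ^ e)
    (hdec : ∀ r, r + 1 < t → L (r + 1) < L r) :
    ∀ a < t, ∑ s ∈ Finset.Ico a t, L s < 2 * L a := by
  suffices h : ∀ d a, t - a ≤ d → a < t → ∑ s ∈ Finset.Ico a t, L s < 2 * L a by
    intro a ha; exact h t a (by omega) ha
  intro d
  induction d with
  | zero => intro a h1 h2; omega
  | succ d ih =>
    intro a h1 h2
    rcases Nat.lt_or_ge (a + 1) t with h | h
    · rw [Finset.sum_eq_sum_Ico_succ_bot h2]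
      have hrec := ih (a + 1) (by omega) h
      -- 2 * L (a+1) ≤ L a since both powers of two and L (a+1) < L a
      obtain ⟨e1, he1⟩ := hpow a h2
      obtain ⟨e2, he2⟩ := hpow (a + 1) h
      have hlt : L (a + 1) < L a := hdec a h
      have : 2 * L (a + 1) ≤ L a := by
        rw [he1, he2] at *
        have : e2 < e1 := by
          by_contra hc
          have := Nat.pow_le_pow_right (two_pos) (show e1 ≤ e2 by omega)
          omega
        calc 2 * 2 ^ e2 = 2 ^ (e2 + 1) := by ring
          _ ≤ 2 ^ e1 := Nat.pow_le_pow_right two_pos (by omega)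
      omega
    · have : t = a + 1 := by omega
      subst this
      rw [Finset.sum_eq_sum_Ico_succ_bot h2]
      simp
      obtain ⟨e, he⟩ := hpow a h2
      have : 0 < L a := by rw [he]; positivity
      omega

open Polynomial in
/-- TFT decomposition (Arnold). Write `ℓ = ℓ_1 + ⋯ + ℓ_t` with powers of two
`ℓ_1 > ⋯ > ℓ_t`, and let `e_r = [ℓ_r + ⋯ + ℓ_t]_p` (with `[n]_p = 0`). For a
polynomial `f` of degree `< ℓ`, the length-`ℓ` TFT of `f` with respect to `ω`
(the vector `(f(ω^{[0]_p}), ..., f(ω^{[ℓ-1]_p}))`) is the concatenation over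
`r = 1, ..., t` of `TFT_{ω^{n/ℓ_r}, ℓ_r}(f_r(x/ω^{e_r}))`, where `f_r` is the
residue of `f(ω^{[ℓ]_p} x)` modulo `x^{ℓ_r} + 1` of degree `< ℓ_r`; here
`ω^{-e}` is expressed as `(ω^{n-1})^e`. The identity is stated entrywise: entry
`(ℓ_1 + ⋯ + ℓ_{r-1}) + j` of the left-hand side equals entry `j` of block `r`. -/
theorem tft_decomposition {R : Type*} [CommRing R]
    (p : ℕ) (hp : 1 ≤ p) (ω : R)
    (hω1 : ω ^ 2 ^ p = 1) (hω2 : ω ^ 2 ^ (p - 1) = -1)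
    (ℓ t : ℕ) (hℓ1 : 1 ≤ ℓ) (hℓn : ℓ ≤ 2 ^ p) (ht : 1 ≤ t)
    (L : ℕ → ℕ)
    (hpow : ∀ r < t, ∃ e, L r = 2 ^ e)
    (hdec : ∀ r, r + 1 < t → L (r + 1) < L r)
    (hsum : ℓ = ∑ r ∈ Finset.range t, L r)
    (f : R[X]) (hf : f.degree < (ℓ : WithBot ℕ))
    (fr : ℕ → R[X])
    (hfr : ∀ r < t, (fr r).degree < (L r : WithBot ℕ) ∧
      (X ^ L r + 1 : R[X]) ∣ (f.comp (C (ω ^ bitRev p ℓ) * X) - fr r)) :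
    ∀ r < t, ∀ j < L r,
      f.eval (ω ^ bitRev p ((∑ s ∈ Finset.range r, L s) + j)) =
        (fr r).eval ((ω ^ (2 ^ p / L r)) ^ bitRev (Nat.log 2 (L r)) j *
          (ω ^ (2 ^ p - 1)) ^ bitRev p (∑ s ∈ Finset.Ico r t, L s)) := by
  
  intro r hr j hj
  obtain ⟨q, hLr⟩ := hpow r hr
  set m := ∑ s ∈ Finset.range r, L s with hm_def
  set S := ∑ s ∈ Finset.Ico r t, L s with hS_def
  have hℓms : ℓ = m + S := by
    rw [hsum, hm_def, hS_def,
      Finset.sum_range_add_sum_Ico _ hr.le]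
  have hSsplit : S = L r + ∑ s ∈ Finset.Ico (r + 1) t, L s :=
    Finset.sum_eq_sum_Ico_succ_bot hr L
  set rest := ∑ s ∈ Finset.Ico (r + 1) t, L s with hrest_def
  have hqp : q ≤ p := by
    have h1 : 2 ^ q ≤ 2 ^ p := by
      have : L r ≤ ℓ := by omega
      omega
    exact (Nat.pow_le_pow_iff_right one_lt_two).mp h1
  rcases eq_or_lt_of_le hqp with hqeq | hqlt
  · -- degenerate case : L r = 2 ^ p, so r = 0, t = 1, ℓ = 2 ^ p
    rw [hqeq] at hLr
    have hr0 : r = 0 := by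
      rcases Nat.eq_zero_or_pos r with h | h
      · exact h
      · exfalso
        have h0t : 0 < t := by omega
        have := L_mono t L hdec 0 r h hr
        obtain ⟨e0, he0⟩ := hpow 0 h0t
        have hlt : (2:ℕ) ^ p < 2 ^ e0 := by rw [← hLr, ← he0]; exact this
        have : ∑ s ∈ Finset.range r, L s + S = ℓ := hℓms.symm
        have hL0 : L 0 ≤ m := by
          rw [hm_def]
          exact Finset.single_le_sum (fun s _ => Nat.zero_le _) (Finset.mem_range.mpr h)
        have hLrS : L r ≤ S := by omega
        omega
    subst hr0
    have ht1 : t = 1 := by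
      by_contra hc
      have h1t : 1 < t := by omega
      have := L_mono t L hdec 0 1 one_pos h1t
      obtain ⟨e1, he1⟩ := hpow 1 h1t
      have hpos : 0 < L 1 := by rw [he1]; positivity
      have : L 0 + L 1 ≤ S := by
        rw [hS_def, Finset.sum_eq_sum_Ico_succ_bot (by omega : 0 < t),
          Finset.sum_eq_sum_Ico_succ_bot (by omega : 1 < t)]
        omega
      have : m = 0 := by simp [hm_def]
      omega
    have hℓeq : ℓ = 2 ^ p := by
      have : m = 0 := by simp [hm_def]
      have : S = L 0 := by rw [hS_def, ht1]; simp
      omega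
    have hSeq : S = 2 ^ p := by
      have : m = 0 := by simp [hm_def]
      omega
    have hm0 : m = 0 := by simp [hm_def]
    -- f = fr 0
    obtain ⟨hdeg, hdvd⟩ := hfr 0 hr
    rw [hℓeq, bitRev_two_pow_self] at hdvd
    simp only [pow_zero, map_one, one_mul, comp_X] at hdvd
    nontriviality R
    have hfrf : f - fr 0 = 0 := by
      obtain ⟨g, hg⟩ := hdvd
      rcases eq_or_ne g 0 with rfl | hg0
      · rw [hg, mul_zero]
      · exfalso
        rw [hLr] at hg
        have hmonic : (X ^ 2 ^ p + 1 : R[X]).Monic := by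
          have := Polynomial.monic_X_pow_add (R := R) (p := 1)
            (n := 2 ^ p) (by simpa using Nat.one_le_two_pow)
          simpa using this
        have hdegmul : ((X ^ 2 ^ p + 1 : R[X]) * g).degree =
            (X ^ 2 ^ p + 1 : R[X]).degree + g.degree := by
          rw [mul_comm, hmonic.degree_mul, add_comm]
        have hdegXp : (X ^ 2 ^ p + 1 : R[X]).degree = (2 ^ p : ℕ) := by
          simpa using Polynomial.degree_X_pow_add_C
            (R := R) (n := 2 ^ p) (by positivity) 1
        have hglb : (0 : WithBot ℕ) ≤ g.degree := Polynomial.zero_le_degree_iff.mpr hg0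
        have hlow : ((2 ^ p : ℕ) : WithBot ℕ) ≤ (f - fr 0).degree := by
          rw [hg, hdegmul, hdegXp]
          calc ((2 ^ p : ℕ) : WithBot ℕ) = (2 ^ p : ℕ) + (0 : WithBot ℕ) := by simp
            _ ≤ (2 ^ p : ℕ) + g.degree := by
                exact add_le_add_right hglb _
        have hhigh : (f - fr 0).degree < ((2 ^ p : ℕ) : WithBot ℕ) := by
          apply lt_of_le_of_lt (Polynomial.degree_sub_le _ _)
          rw [max_lt_iff]
          constructor
          · rw [← hℓeq]; exact hf
          · rw [← hLr]; exact hdeg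
        exact absurd (lt_of_le_of_lt hlow hhigh) (lt_irrefl _)
    have hfr0 : fr 0 = f := (sub_eq_zero.mp hfrf).symm
    rw [hfr0, hSeq, bitRev_two_pow_self, pow_zero, mul_one, hLr,
      Nat.div_self (by positivity), pow_one, Nat.log_pow one_lt_two, hm0, zero_add]
  · -- main case : q < p
    have hjq : j < 2 ^ q := by omega
    have hrest_lt : rest < 2 ^ q := by
      rcases Nat.lt_or_ge (r + 1) t with h | h
      · have hb := L_sum_lt t L hpow hdec (r + 1) h
        obtain ⟨e1, he1⟩ := hpow (r + 1) h
        have hlt : L (r + 1) < L r := hdec r h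
        have he1q : e1 < q := by
          rw [hLr, he1] at hlt
          exact (Nat.pow_lt_pow_iff_right one_lt_two).mp hlt
        have h2 : 2 * 2 ^ e1 ≤ 2 ^ q :=
          calc 2 * 2 ^ e1 = 2 ^ (e1 + 1) := by ring
            _ ≤ 2 ^ q := Nat.pow_le_pow_right two_pos (by omega)
        omega
      · have h0 : rest = 0 := by
          rw [hrest_def, Finset.Ico_eq_empty (by omega), Finset.sum_empty]
        have : (0:ℕ) < 2 ^ q := by positivity
        omega
    have hmdvd : 2 ^ (q + 1) ∣ m := by
      rw [hm_def]
      apply Finset.dvd_sum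
      intro s hs
      have hsr := Finset.mem_range.mp hs
      have hst : s < t := lt_trans hsr hr
      obtain ⟨es, hes⟩ := hpow s hst
      have hls := L_mono t L hdec s r hsr hr
      have hqes : q < es := by
        rw [hLr, hes] at hls
        exact (Nat.pow_lt_pow_iff_right one_lt_two).mp hls
      rw [hes]
      exact pow_dvd_pow 2 (by omega)
    have hSval : S = 2 ^ q + rest := by rw [hSsplit, hLr]
    have hSlt : S < 2 ^ (q + 1) := by rw [hSval, pow_succ]; omega
    have hbmj : bitRev p (m + j) = bitRev p m + 2 ^ (p - q) * bitRev q j := by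
      rw [bitRev_add p (q + 1) m j hmdvd (by rw [pow_succ]; omega),
        bitRev_small p q j hqp hjq]
    have hbS : bitRev p S = 2 ^ (p - 1 - q) + 2 ^ (p - q) * bitRev q rest := by
      rw [hSval, bitRev_add p q _ _ dvd_rfl hrest_lt, bitRev_two_pow p q hqlt,
        bitRev_small p q rest hqp hrest_lt]
    have hbl : bitRev p ℓ = bitRev p m + bitRev p S := by
      rw [hℓms, bitRev_add p (q + 1) m S hmdvd hSlt]
    set e := bitRev p S with he_def
    set B := bitRev q rest with hB_def
    set Bj := bitRev q j with hBj_def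
    have h2q : (2:ℕ) ^ (p - q) * 2 ^ q = 2 ^ p := by rw [← pow_add]; congr 1; omega
    have h2q1 : (2:ℕ) ^ (p - 1 - q) * 2 ^ q = 2 ^ (p - 1) := by
      rw [← pow_add]; congr 1; omega
    have hhalf : ω ^ (e * 2 ^ q) = -1 := by
      have harith : e * 2 ^ q = 2 ^ (p - 1) + 2 ^ p * B := by
        rw [hbS, add_mul, h2q1, mul_right_comm, h2q]
      rw [harith, pow_add, hω2, pow_mul, hω1, one_pow, mul_one]
    have hodd : Odd (2 ^ p - 1) :=
      Nat.Even.sub_odd Nat.one_le_two_pow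
        ((Nat.even_pow).mpr ⟨even_two, by omega⟩) odd_one
    set xv := (ω ^ 2 ^ (p - q)) ^ Bj * (ω ^ (2 ^ p - 1)) ^ e with hxv
    have hxpow : xv ^ 2 ^ q = -1 := by
      have t1 : ((ω ^ 2 ^ (p - q)) ^ Bj) ^ 2 ^ q = 1 := by
        rw [← pow_mul, ← pow_mul,
          show 2 ^ (p - q) * (Bj * 2 ^ q) = 2 ^ p * Bj from by rw [← h2q]; ring,
          pow_mul, hω1, one_pow]
      have t2 : ((ω ^ (2 ^ p - 1)) ^ e) ^ 2 ^ q = -1 := by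
        rw [← pow_mul, ← pow_mul, mul_comm (2 ^ p - 1) (e * 2 ^ q),
          pow_mul, hhalf, Odd.neg_one_pow hodd]
      rw [hxv, mul_pow, t1, t2, one_mul]
    have hunit : ω ^ e * (ω ^ (2 ^ p - 1)) ^ e = 1 := by
      have h1 : (2 ^ p - 1) + 1 = 2 ^ p := by
        have : (1:ℕ) ≤ 2 ^ p := Nat.one_le_two_pow
        omega
      calc ω ^ e * (ω ^ (2 ^ p - 1)) ^ e = (ω * ω ^ (2 ^ p - 1)) ^ e := by
            rw [mul_pow]
        _ = (ω ^ 2 ^ p) ^ e := by rw [← pow_succ', h1]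
        _ = 1 := by rw [hω1, one_pow]
    have hcx : ω ^ bitRev p ℓ * xv = ω ^ bitRev p (m + j) := by
      rw [hbl, hbmj, pow_add, pow_add, pow_mul, hxv]
      linear_combination (ω ^ bitRev p m * (ω ^ 2 ^ (p - q)) ^ Bj) * hunit
    obtain ⟨hdeg, g, hg⟩ := hfr r hr
    have hev := congrArg (Polynomial.eval xv) hg
    simp only [Polynomial.eval_sub, Polynomial.eval_comp, Polynomial.eval_mul,
      Polynomial.eval_C, Polynomial.eval_X, Polynomial.eval_add, Polynomial.eval_pow,
      Polynomial.eval_one] at hev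
    rw [hcx, hLr, hxpow, neg_add_cancel, zero_mul] at hev
    rw [hLr, Nat.pow_div hqp two_pos, Nat.log_pow one_lt_two, ← hBj_def, ← hxv]
    exact sub_eq_zero.mp hev
end

section
/- For the radix-2 setting, for q < 2^{m−1} written as q = ∑_{r=1}^t 2^{i_r} with i_1 > ... > i_t, one has [2(2^{i_1} + ... + 2^{i_{s−1}} + [j]_{i_s})]_p = 2^{p−1−i_s} j + ∑_{r=1}^{s−1} 2^{p−2−i_r} for s ∈ {1,...,t} and j ∈ {0,...,2^{i_s}−1}. -/
open Finset

lemma sum_digits_lt (k : ℕ) (c : ℕ → ℕ) (hc : ∀ b, c b ≤ 1) :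
    ∑ b ∈ range k, 2 ^ b * c b < 2 ^ k := by
  induction k with
  | zero => simp
  | succ k ih =>
    rw [Finset.sum_range_succ, pow_succ]
    have h1 := hc k
    have h2 : 2 ^ k * c k ≤ 2 ^ k * 1 := Nat.mul_le_mul_left _ h1
    omega

lemma sum_digits_digit (k : ℕ) (c : ℕ → ℕ) (hc : ∀ b, c b ≤ 1) (b : ℕ) :
    (∑ b' ∈ range k, 2 ^ b' * c b') / 2 ^ b % 2 = if b < k then c b else 0 := by
  induction k with
  | zero => simp
  | succ k ih =>
    rw [Finset.sum_range_succ]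
    rcases lt_trichotomy b k with h | h | h
    · have hkb : 2 ^ k * c k = 2 ^ b * (2 ^ (k - b) * c k) := by
        rw [← mul_assoc, ← pow_add]
        congr 2
        omega
      rw [hkb, Nat.add_mul_div_left _ _ (Nat.two_pow_pos b)]
      have h2 : 2 ^ (k - b) * c k = 2 * (2 ^ (k - b - 1) * c k) := by
        rw [← mul_assoc]
        congr 1
        rw [← pow_succ']
        congr 1
        omega
      rw [h2, Nat.add_mul_mod_self_left, ih, if_pos h, if_pos (by omega)]
    · subst h
      rw [Nat.add_mul_div_left _ _ (Nat.two_pow_pos b),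
        Nat.div_eq_of_lt (sum_digits_lt b c hc)]
      have := hc b
      simp only [if_pos (Nat.lt_succ_self b)]
      omega
    · have hlt : ∑ b' ∈ range k, 2 ^ b' * c b' + 2 ^ k * c k < 2 ^ b := by
        have h1 := sum_digits_lt (k + 1) c hc
        rw [Finset.sum_range_succ] at h1
        calc _ < 2 ^ (k + 1) := h1
        _ ≤ 2 ^ b := Nat.pow_le_pow_right (by norm_num) h
      rw [Nat.div_eq_of_lt hlt, if_neg (by omega)]

lemma sum_digits_of_lt (k x : ℕ) (h : x < 2 ^ k) :
    ∑ b ∈ range k, 2 ^ b * (x / 2 ^ b % 2) = x := by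
  have key : ∀ n y : ℕ, ∑ b ∈ range n, 2 ^ b * (y / 2 ^ b % 2) = y % 2 ^ n := by
    intro n
    induction n with
    | zero => intro y; simp [Nat.mod_one]
    | succ n ih =>
      intro y
      rw [Finset.sum_range_succ, ih]
      have e1 := Nat.div_add_mod y (2 ^ n)
      have e2 := Nat.div_add_mod (y / 2 ^ n) 2
      have e3 : y / 2 ^ n / 2 = y / 2 ^ (n + 1) := by
        rw [Nat.div_div_eq_div_mul, ← pow_succ]
      rw [e3] at e2
      have e4 : 2 ^ n * (y / 2 ^ n) = 2 ^ (n + 1) * (y / 2 ^ (n + 1)) + 2 ^ n * (y / 2 ^ n % 2) := by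
        conv_lhs => rw [← e2]
        ring
      have h1 : y = 2 ^ (n + 1) * (y / 2 ^ (n + 1)) + (y % 2 ^ n + 2 ^ n * (y / 2 ^ n % 2)) := by
        linarith [e1, e4]
      have hm := Nat.mod_lt y (Nat.two_pow_pos n)
      have hd : 2 ^ n * (y / 2 ^ n % 2) ≤ 2 ^ n * 1 :=
        Nat.mul_le_mul_left _ (by omega : y / 2 ^ n % 2 ≤ 1)
      have h2 : y % 2 ^ n + 2 ^ n * (y / 2 ^ n % 2) < 2 ^ (n + 1) := by
        rw [pow_succ]; linarith
      conv_rhs => rw [h1]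
      rw [Nat.mul_add_mod, Nat.mod_eq_of_lt h2]
  rw [key, Nat.mod_eq_of_lt h]

lemma bitRev_sum_digits (k : ℕ) (c : ℕ → ℕ) (hc : ∀ b, c b ≤ 1) :
    bitRev k (∑ b ∈ range k, 2 ^ b * c b) = ∑ b ∈ range k, 2 ^ (k - 1 - b) * c b := by
  unfold bitRev
  refine Finset.sum_congr rfl fun u hu => ?_
  rw [sum_digits_digit k c hc u, if_pos (Finset.mem_range.mp hu)]

lemma i_strictAnti (t : ℕ) (i : ℕ → ℕ) (hdec : ∀ r, r + 1 < t → i (r + 1) < i r) :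
    ∀ a b, a < b → b < t → i b < i a := by
  intro a b
  induction b with
  | zero => omega
  | succ b ih =>
    intro hab hbt
    rcases Nat.lt_succ_iff_lt_or_eq.mp hab with h | h
    · exact lt_trans (hdec b hbt) (ih h (by omega))
    · subst h; exact hdec a hbt

/-- Bit-reversal identity for twiddle indices: for nonnegative integers
`i_1 > i_2 > ⋯ > i_t` with `2^{i_1} + ⋯ + 2^{i_t} = q < 2^{m-1} ≤ 2^{p-1}`,
for each `s ∈ {1, ..., t}` and `j ∈ {0, ..., 2^{i_s} - 1}`,
`[2(2^{i_1} + ⋯ + 2^{i_{s-1}} + [j]_{i_s})]_p = 2^{p-1-i_s} j + ∑_{r=1}^{s-1} 2^{p-2-i_r}`. -/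
theorem bitRev_twiddle_identity (p m t : ℕ) (hm1 : 1 ≤ m) (hmp : m ≤ p) (ht : 1 ≤ t)
    (i : ℕ → ℕ) (hdec : ∀ r, r + 1 < t → i (r + 1) < i r)
    (hq : ∑ r ∈ Finset.range t, 2 ^ i r < 2 ^ (m - 1)) :
    ∀ s < t, ∀ j < 2 ^ i s,
      bitRev p (2 * ((∑ r ∈ Finset.range s, 2 ^ i r) + bitRev (i s) j)) =
        2 ^ (p - 1 - i s) * j + ∑ r ∈ Finset.range s, 2 ^ (p - 2 - i r) := by
  intro s hst j hj
  set k := i s with hk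
  -- basic bounds
  have hir : ∀ r < t, i r + 2 ≤ p := by
    intro r hr
    have h1 : 2 ^ i r ≤ ∑ r' ∈ Finset.range t, 2 ^ i r' :=
      Finset.single_le_sum (f := fun r' => 2 ^ i r') (fun _ _ => Nat.zero_le _)
        (Finset.mem_range.mpr hr)
    have h2 : 2 ^ i r < 2 ^ (p - 1) :=
      lt_of_le_of_lt h1 (lt_of_lt_of_le hq (Nat.pow_le_pow_right (by norm_num) (by omega)))
    have h3 : i r < p - 1 := by
      by_contra hcon
      exact absurd (Nat.pow_le_pow_right (by norm_num : 1 ≤ 2) (by omega : p - 1 ≤ i r)) (by omega)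
    omega
  have hkp : k + 2 ≤ p := hir s hst
  have hgt : ∀ r < s, k < i r := fun r hr => i_strictAnti t i hdec r s hr hst
  -- digit functions
  set c1 : ℕ → ℕ := fun b => if b ∈ (Finset.range s).image (fun r => i r + 1) then 1 else 0
    with hc1def
  set c2 : ℕ → ℕ := fun b => if b ∈ Finset.Icc 1 k then j / 2 ^ (k - b) % 2 else 0 with hc2def
  have hc1 : ∀ b, c1 b ≤ 1 := by intro b; simp only [hc1def]; split <;> omega
  have hc2 : ∀ b, c2 b ≤ 1 := by
    intro b; simp only [hc2def]; split
    · omega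
    · omega
  have hdisj : ∀ b, c1 b = 0 ∨ c2 b = 0 := by
    intro b
    simp only [hc1def, hc2def]
    by_cases hb : b ∈ (Finset.range s).image (fun r => i r + 1)
    · right
      obtain ⟨r, hr, hrb⟩ := Finset.mem_image.mp hb
      have := hgt r (Finset.mem_range.mp hr)
      rw [if_neg (by rw [Finset.mem_Icc]; omega)]
    · left; rw [if_neg hb]
  have hinj : Set.InjOn (fun r => i r + 1) (Finset.range s) := by
    intro a ha b hb hab
    simp only [Finset.coe_range, Set.mem_Iio] at ha hb
    simp only at hab
    by_contra hne
    rcases Nat.lt_or_ge a b with h | h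
    · have := i_strictAnti t i hdec a b h (by omega); omega
    · have := i_strictAnti t i hdec b a (by omega) (by omega); omega
  have hT : ((Finset.range s).image (fun r => i r + 1)) ⊆ Finset.range p := by
    intro b hb
    obtain ⟨r, hr, hrb⟩ := Finset.mem_image.mp hb
    have := hir r (by have := Finset.mem_range.mp hr; omega)
    exact Finset.mem_range.mpr (by omega)
  -- c1 sums
  have hA : ∀ f : ℕ → ℕ, ∑ b ∈ Finset.range p, f b * c1 b = ∑ r ∈ Finset.range s, f (i r + 1) := by
    intro f
    simp only [hc1def, mul_ite, mul_one, mul_zero]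
    rw [Finset.sum_ite_mem, Finset.inter_eq_right.mpr hT, Finset.sum_image hinj]
  -- c2 sums
  have himg : Finset.Icc 1 k = (Finset.range k).image (fun u => k - u) := by
    ext b
    simp only [Finset.mem_Icc, Finset.mem_image, Finset.mem_range]
    constructor
    · rintro ⟨h1, h2⟩; exact ⟨k - b, by omega, by omega⟩
    · rintro ⟨u, hu, rfl⟩; omega
  have hinj2 : Set.InjOn (fun u => k - u) (Finset.range k) := by
    intro a ha b hb hab
    simp only [Finset.coe_range, Set.mem_Iio] at ha hb
    simp only at hab
    omega
  have hB : ∀ f : ℕ → ℕ, ∑ b ∈ Finset.range p, f b * c2 b =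
      ∑ u ∈ Finset.range k, f (k - u) * (j / 2 ^ u % 2) := by
    intro f
    simp only [hc2def, mul_ite, mul_zero]
    rw [Finset.sum_ite_mem, Finset.inter_eq_right.mpr
      (fun b hb => Finset.mem_range.mpr (by have := Finset.mem_Icc.mp hb; omega)),
      himg, Finset.sum_image hinj2]
    refine Finset.sum_congr rfl fun u hu => ?_
    have hu' := Finset.mem_range.mp hu
    have he : k - (k - u) = u := by omega
    simp only [he]
  -- the argument as a digit sum
  have hX : 2 * ((∑ r ∈ Finset.range s, 2 ^ i r) + bitRev k j) =
      ∑ b ∈ Finset.range p, 2 ^ b * (c1 b + c2 b) := by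
    simp only [mul_add, Finset.sum_add_distrib]
    rw [hA (fun b => 2 ^ b), hB (fun b => 2 ^ b)]
    congr 1
    · rw [Finset.mul_sum]
      refine Finset.sum_congr rfl fun r _ => ?_
      rw [pow_succ]; ring
    · unfold bitRev
      rw [Finset.mul_sum]
      refine Finset.sum_congr rfl fun u hu => ?_
      have hu' := Finset.mem_range.mp hu
      rw [← mul_assoc]
      congr 1
      rw [← pow_succ']
      congr 1
      omega
  rw [hX, bitRev_sum_digits p _ (fun b => by have := hdisj b; have := hc1 b; have := hc2 b; omega)]
  simp only [mul_add, Finset.sum_add_distrib]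
  rw [hA (fun b => 2 ^ (p - 1 - b)), hB (fun b => 2 ^ (p - 1 - b))]
  rw [add_comm]
  congr 1
  · have : ∀ u ∈ Finset.range k, 2 ^ (p - 1 - (k - u)) * (j / 2 ^ u % 2) =
        2 ^ (p - 1 - k) * (2 ^ u * (j / 2 ^ u % 2)) := by
      intro u hu
      have hu' := Finset.mem_range.mp hu
      rw [← mul_assoc, ← pow_add]
      congr 2
      omega
    rw [Finset.sum_congr rfl this, ← Finset.mul_sum, sum_digits_of_lt k j hj]
  · refine Finset.sum_congr rfl fun r hr => ?_
    congr 1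
    omega
end

section
/- (Nesting of index sets.) Let ℓ ∈ {2,...,2^m} with ℓ < 2^m not required; set v = ord₂(ℓ), q_k = ⌊ℓ/2^{k+1}⌋, r_k = ℓ − 2^{k+1} q_k, q_k' = q_k − 2^{m−2−k}. Define R_k = {i ∈ ℤ : 2^k·2q_k ≤ i < ℓ} for k < m−1 and R_{m−1} = {i : 2^{m−1} ≤ i < ℓ}; define R_k' = {i : ℓ − 2^{m−1} ≤ i < 2^k(2q_k'+2)} if r_k > 2^k, and R_k' = {i : ℓ − 2^{m−1} ≤ i < 2^k(2q_k'+1)} if r_k ≤ 2^k. Then R_v ⊆ R_{v+1} ⊆ ... ⊆ R_{m−1}, and ∅ = R_v' ⊆ R_{v+1}' ⊆ ... ⊆ R_{m−1}'. -/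
/-- `q_k = ⌊ℓ/2^(k+1)⌋`. -/
def qk (ℓ k : ℕ) : ℕ := ℓ / 2 ^ (k + 1)

/-- `r_k = ℓ - 2^(k+1) q_k`, the remainder of `ℓ` modulo `2^(k+1)`. -/
def rk (ℓ k : ℕ) : ℕ := ℓ % 2 ^ (k + 1)

/-- `q_k' = q_k - 2^(m-2-k)`, as a rational number (the exponent `m - 2 - k`
may be negative, e.g. for `k = m - 1`). -/
def qk' (m ℓ k : ℕ) : ℚ := (qk ℓ k : ℚ) - (2 : ℚ) ^ ((m : ℤ) - 2 - (k : ℤ))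

/-- `R_k = {i ∈ ℤ : 2^k · 2q_k ≤ i < ℓ}` for `k < m - 1`, and
`R_{m-1} = {i ∈ ℤ : 2^(m-1) ≤ i < ℓ}`. -/
def Rset (m ℓ k : ℕ) : Set ℤ :=
  if k = m - 1 then {i : ℤ | 2 ^ (m - 1) ≤ i ∧ i < (ℓ : ℤ)}
  else {i : ℤ | (2 : ℤ) ^ k * (2 * qk ℓ k) ≤ i ∧ i < (ℓ : ℤ)}

/-- `R_k' = {i ∈ ℤ : ℓ - 2^(m-1) ≤ i < 2^k (2 q_k' + 2)}` if `r_k > 2^k`, and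
`R_k' = {i ∈ ℤ : ℓ - 2^(m-1) ≤ i < 2^k (2 q_k' + 1)}` if `r_k ≤ 2^k`
(the upper bounds are interpreted in `ℚ`). -/
def Rset' (m ℓ k : ℕ) : Set ℤ :=
  if 2 ^ k < rk ℓ k then
    {i : ℤ | (ℓ : ℤ) - 2 ^ (m - 1) ≤ i ∧ (i : ℚ) < 2 ^ k * (2 * qk' m ℓ k + 2)}
  else
    {i : ℤ | (ℓ : ℤ) - 2 ^ (m - 1) ≤ i ∧ (i : ℚ) < 2 ^ k * (2 * qk' m ℓ k + 1)}

theorem key_calc (m ℓ k : ℕ) (hm : 1 ≤ m) (c : ℚ) :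
    (2 : ℚ) ^ k * (2 * qk' m ℓ k + c) = (ℓ : ℚ) - 2 ^ (m - 1) - rk ℓ k + c * 2 ^ k := by
  have hq : ((2:ℚ)^(k+1)) * (qk ℓ k) = (ℓ:ℚ) - rk ℓ k := by
    have h := Nat.div_add_mod ℓ (2 ^ (k+1))
    have h2 : ((2^(k+1) * (ℓ / 2^(k+1)) + ℓ % 2^(k+1) : ℕ) : ℚ) = (ℓ:ℚ) := by
      rw [h]
    unfold qk rk
    push_cast at h2 ⊢
    linarith
  have hp : (2:ℚ)^(k:ℕ) * (2 * (2:ℚ)^((m:ℤ)-2-(k:ℤ))) = 2^(m-1) := by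
    have e : ((k:ℤ) + 1) + ((m:ℤ) - 2 - (k:ℤ)) = ((m - 1 : ℕ) : ℤ) := by omega
    calc (2:ℚ)^(k:ℕ) * (2 * (2:ℚ)^((m:ℤ)-2-(k:ℤ)))
        = (2:ℚ)^((k:ℤ)+1) * (2:ℚ)^((m:ℤ)-2-(k:ℤ)) := by
          rw [zpow_add₀ (two_ne_zero), zpow_one, zpow_natCast]; ring
      _ = (2:ℚ)^(((k:ℤ)+1) + ((m:ℤ)-2-(k:ℤ))) := (zpow_add₀ two_ne_zero _ _).symm
      _ = (2:ℚ)^(m-1:ℕ) := by rw [e, zpow_natCast]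
  have h2 : (2:ℚ)^k * (2 * qk' m ℓ k + c)
      = (2:ℚ)^(k+1) * qk ℓ k - ((2:ℚ)^k * (2 * (2:ℚ)^((m:ℤ)-2-(k:ℤ)))) + c * 2^k := by
    unfold qk'; ring
  rw [h2, hq, hp]; ring

theorem Rset'_eq (m ℓ k : ℕ) (hm : 1 ≤ m) :
    Rset' m ℓ k = {i : ℤ | (ℓ : ℤ) - 2 ^ (m - 1) ≤ i ∧
      i < (ℓ : ℤ) - 2 ^ (m - 1) - rk ℓ k + (if 2 ^ k < rk ℓ k then 2 else 1) * 2 ^ k} := by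
  have cast_iff : ∀ (c : ℚ) (cz : ℤ), (c = (cz : ℚ)) → ∀ i : ℤ,
      ((i : ℚ) < 2 ^ k * (2 * qk' m ℓ k + c) ↔
      i < (ℓ : ℤ) - 2 ^ (m - 1) - rk ℓ k + cz * 2 ^ k) := by
    intro c cz hc i
    rw [key_calc m ℓ k hm c, hc]
    rw [show ((ℓ:ℚ) - 2 ^ (m-1) - rk ℓ k + (cz:ℚ) * 2 ^ k)
        = (((ℓ : ℤ) - 2 ^ (m - 1) - rk ℓ k + cz * 2 ^ k : ℤ) : ℚ) by push_cast; ring]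
    exact Int.cast_lt
  unfold Rset'
  split_ifs with h
  · ext i; simp only [Set.mem_setOf_eq]
    rw [cast_iff 2 2 (by norm_num) i]
  · ext i; simp only [Set.mem_setOf_eq]
    rw [cast_iff 1 1 (by norm_num) i]

/-- Nesting of the index sets: with `m = ⌈log₂ ℓ⌉`, `ℓ < 2^m` and `v = ord₂ ℓ`,
one has `R_v ⊆ R_{v+1} ⊆ ⋯ ⊆ R_{m-1}` and `∅ = R_v' ⊆ R_{v+1}' ⊆ ⋯ ⊆ R_{m-1}'`. -/
theorem Rset_nesting (ℓ m v : ℕ) (hℓ2 : 2 ≤ ℓ) (hm : m = Nat.clog 2 ℓ)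
    (hℓm : ℓ < 2 ^ m) (hv : v = padicValNat 2 ℓ) :
    Rset' m ℓ v = ∅ ∧
    ∀ k, v ≤ k → k + 1 ≤ m - 1 →
      Rset m ℓ k ⊆ Rset m ℓ (k + 1) ∧ Rset' m ℓ k ⊆ Rset' m ℓ (k + 1) := by
  have hm2 : 2 ≤ m := by
    rcases m with _ | _ | m
    · simp at hℓm; omega
    · simp at hℓm; omega
    · omega
  have hlow : 2 ^ (m - 1) < ℓ := by
    by_contra h
    push_neg at h
    have := (Nat.clog_le_iff_le_pow one_lt_two).mpr h
    omega
  have hℓ0 : ℓ ≠ 0 := by omega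
  have hrne : ∀ k, v ≤ k → rk ℓ k ≠ 0 := by
    intro k hk h
    have hdvd : 2 ^ (k + 1) ∣ ℓ := Nat.dvd_of_mod_eq_zero h
    have h2 := (padicValNat_dvd_iff_le (p := 2) hℓ0).mp hdvd
    omega
  have hrv : rk ℓ v = 2 ^ v := by
    have hd : 2 ^ v ∣ ℓ := hv ▸ pow_padicValNat_dvd
    have hnd : ¬ 2 ^ (v + 1) ∣ ℓ := by
      intro hdvd
      have := (padicValNat_dvd_iff_le (p := 2) hℓ0).mp hdvd
      omega
    have hdm : 2 ^ v ∣ rk ℓ v := by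
      unfold rk
      exact (Nat.dvd_mod_iff (pow_dvd_pow 2 (by omega))).mpr hd
    obtain ⟨c, hc⟩ := hdm
    have hlt : rk ℓ v < 2 ^ (v + 1) := Nat.mod_lt _ (by positivity)
    have hne : rk ℓ v ≠ 0 := by
      intro h; exact hnd (Nat.dvd_of_mod_eq_zero h)
    have hc2 : c < 2 := by
      by_contra hcc
      push_neg at hcc
      have h2 : 2 ^ v * 2 ≤ 2 ^ v * c := Nat.mul_le_mul_left _ hcc
      have h3 : (2:ℕ) ^ (v + 1) = 2 ^ v * 2 := by ring
      omega
    interval_cases c <;> omega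
  constructor
  · rw [Rset'_eq m ℓ v (by omega), hrv, if_neg (lt_irrefl _)]
    ext i
    simp only [Set.mem_setOf_eq, Set.mem_empty_iff_false, iff_false, not_and, not_lt]
    intro h
    have hcast : ((2 ^ v : ℕ) : ℤ) = (2:ℤ) ^ v := by push_cast; ring
    omega
  · intro k hvk hk1
    have A1 : 2 ^ (k + 1) * qk ℓ k + rk ℓ k = ℓ := Nat.div_add_mod ℓ (2 ^ (k + 1))
    have A2 : 2 ^ (k + 2) * qk ℓ (k + 1) + rk ℓ (k + 1) = ℓ := Nat.div_add_mod ℓ (2 ^ (k + 2))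
    have A3 : rk ℓ (k + 1) % 2 ^ (k + 1) = rk ℓ k :=
      Nat.mod_mod_of_dvd ℓ (pow_dvd_pow 2 (by omega))
    have A4 : rk ℓ (k + 1) < 2 ^ (k + 2) := Nat.mod_lt _ (by positivity)
    have A5 := hrne k hvk
    have hdich : rk ℓ (k + 1) = rk ℓ k ∨ rk ℓ (k + 1) = rk ℓ k + 2 ^ (k + 1) := by
      have hd := Nat.div_add_mod (rk ℓ (k + 1)) (2 ^ (k + 1))
      have hq2 : rk ℓ (k + 1) / 2 ^ (k + 1) < 2 := by
        rw [Nat.div_lt_iff_lt_mul (by positivity)]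
        calc rk ℓ (k + 1) < 2 ^ (k + 2) := A4
          _ = 2 * 2 ^ (k + 1) := by ring
      set d := rk ℓ (k + 1) / 2 ^ (k + 1) with hdd
      interval_cases d <;> omega
    constructor
    · -- Rset nesting
      have hkne : k ≠ m - 1 := by omega
      intro i hi
      rw [Rset, if_neg hkne] at hi
      obtain ⟨h1, h2⟩ := hi
      by_cases hk : k + 1 = m - 1
      · rw [Rset, if_pos hk]
        refine ⟨?_, h2⟩
        have hrk : rk ℓ k = ℓ - 2 ^ (m - 1) := by
          unfold rk
          have he : (2:ℕ) ^ (k + 1) = 2 ^ (m - 1) := by rw [hk]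
          rw [he]
          have h2m : ℓ - 2 ^ (m - 1) < 2 ^ (m - 1) := by
            have : (2:ℕ) ^ m = 2 * 2 ^ (m - 1) := by
              rw [← pow_succ']; congr 1; omega
            omega
          rw [Nat.mod_eq_sub_mod (le_of_lt hlow), Nat.mod_eq_of_lt h2m]
        have heq : 2 ^ (k + 1) * qk ℓ k = 2 ^ (m - 1) := by omega
        calc (2:ℤ) ^ (m - 1) = ((2 ^ (k + 1) * qk ℓ k : ℕ) : ℤ) := by
              rw [heq]; push_cast; ring
          _ = (2:ℤ) ^ k * (2 * qk ℓ k) := by push_cast; ring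
          _ ≤ i := h1
      · rw [Rset, if_neg hk]
        refine ⟨?_, h2⟩
        have F : 2 ^ (k + 2) * qk ℓ (k + 1) ≤ 2 ^ (k + 1) * qk ℓ k := by omega
        calc (2:ℤ) ^ (k + 1) * (2 * qk ℓ (k + 1))
            = ((2 ^ (k + 2) * qk ℓ (k + 1) : ℕ) : ℤ) := by push_cast; ring
          _ ≤ ((2 ^ (k + 1) * qk ℓ k : ℕ) : ℤ) := by exact_mod_cast F
          _ = (2:ℤ) ^ k * (2 * qk ℓ k) := by push_cast; ring
          _ ≤ i := h1
    · -- Rset' nesting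
      rw [Rset'_eq m ℓ k (by omega), Rset'_eq m ℓ (k + 1) (by omega)]
      intro i hi
      obtain ⟨h1, h2⟩ := hi
      refine ⟨h1, ?_⟩
      have e1 : (2:ℤ) ^ (k + 1) = 2 * 2 ^ k := by ring
      have c1 : ((2 ^ k : ℕ) : ℤ) = (2:ℤ) ^ k := by push_cast; ring
      have c2 : ((2 ^ (k + 1) : ℕ) : ℤ) = (2:ℤ) ^ (k + 1) := by push_cast; ring
      split_ifs at h2 ⊢ with hc1 hc2 hc2 <;>
        rcases hdich with hb | hb <;> omega
end
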